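/- Let (X,d) be a compact metric space, μ a Borel probability measure, T : X → X ergodic and measure-preserving. For x ∈ X and n ≥ 1 let μ_n^x = (1/n²) ∑_{i=1}^n ∑_{j=1}^n δ_{(T^i x, T^j x)} be the empirical measure on X × X. Then for μ-almost every x, μ_n^x converges in the weak-* topology to the product measure μ × μ. -/

import Mathlib

open MeasureTheory Filter Topology
open scoped BoundedContinuousFunction ENNReal

/-!
For almost every `x`, the empirical measures of the orbit of `x` converge weakly to `μ`: this is
Birkhoff's ergodic theorem for the functions of a countable dense subset of `C(X, ℝ)`, and weak
convergence may be tested on a dense set of test functions because integration against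
probability measures is `1`-Lipschitz in the sup norm. The measure `μₙˣ` is the product of the
empirical measure of `T x, …, Tⁿ x` with itself, and the product of probability measures is
weakly continuous, so `μₙˣ → μ × μ`.

Birkhoff's theorem for a bounded observable `g` is proved as in Katznelson–Weiss. The limsup of
the Birkhoff averages is `T`-invariant, hence a.e. equal to a constant `c`. For `g ≥ 0` and
`0 ≤ a < c`, the sets `E` of points whose Birkhoff sums reach `a n` at some time `1 ≤ n ≤ M`
exhaust almost all of the space as `M → ∞`. Cutting an orbit segment of length `N` into such
stretches, and unit steps at the points outside `E`, gives
`a N ≤ S_N g + a M + a #{k < N | Tᵏ x ∉ E}`; integrating, `a μ(E) ≤ ∫ g`, hence `c ≤ ∫ g`.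
Applied to `g` and `-g`, this gives `limsup = liminf = ∫ g`.
-/

open Finset in
theorem mul_le_birkhoffSum_add_of_cover {α : Type*} {T : α → α} {g : α → ℝ} {a : ℝ} {E : Set α}
    {M : ℕ} (hg : 0 ≤ g) (ha : 0 ≤ a)
    (hE : ∀ y ∈ E, ∃ n ∈ Icc 1 M, a * n ≤ birkhoffSum T g n y) (N : ℕ) (x : α) :
    a * N ≤ birkhoffSum T g N x + a * M + a * birkhoffSum T (Eᶜ.indicator 1) N x := by
  have hS : ∀ {φ : α → ℝ}, 0 ≤ φ → ∀ n y, 0 ≤ birkhoffSum T φ n y := fun hφ n y =>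
    sum_nonneg fun k _ => hφ _
  have hI : (0 : α → ℝ) ≤ Eᶜ.indicator 1 := Set.indicator_nonneg fun _ _ => zero_le_one
  induction N using Nat.strong_induction_on generalizing x with
  | _ N IH =>
  rcases le_or_gt N M with hNM | hMN
  · have := hS hg N x
    have := mul_nonneg ha (hS hI N x)
    have : a * N ≤ a * M := by gcongr
    linarith
  obtain ⟨k, hk1, hkN, hk⟩ : ∃ k, 1 ≤ k ∧ k ≤ N ∧
      a * k ≤ birkhoffSum T g k x + a * birkhoffSum T (Eᶜ.indicator 1) k x := by
    by_cases hx : x ∈ E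
    · obtain ⟨n, hn, hgn⟩ := hE x hx
      rw [mem_Icc] at hn
      have := mul_nonneg ha (hS hI n x)
      exact ⟨n, hn.1, by omega, by linarith⟩
    · refine ⟨1, le_rfl, by omega, ?_⟩
      simpa [Set.indicator_of_mem (Set.mem_compl hx)] using hg x
  have h := IH (N - k) (by omega) (T^[k] x)
  obtain ⟨m, rfl⟩ : ∃ m, N = k + m := ⟨N - k, by omega⟩
  rw [Nat.add_sub_cancel_left] at h
  rw [birkhoffSum_add, birkhoffSum_add]
  push_cast
  linarith

section Measurability

variable {α : Type*} [MeasurableSpace α] {T : α → α} {g : α → ℝ}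

theorem Measurable.birkhoffSum (hT : Measurable T) (hg : Measurable g) (n : ℕ) :
    Measurable (birkhoffSum T g n) :=
  Finset.measurable_sum _ fun k _ => hg.comp (hT.iterate k)

theorem Measurable.birkhoffAverage (hT : Measurable T) (hg : Measurable g) (n : ℕ) :
    Measurable (birkhoffAverage ℝ T g n) := by
  unfold _root_.birkhoffAverage
  exact (hT.birkhoffSum hg n).const_smul ((n : ℝ)⁻¹)

end Measurability

namespace MeasureTheory.MeasurePreserving

variable {α : Type*} [MeasurableSpace α] {μ : Measure α} {T : α → α} {g : α → ℝ}

theorem integrable_comp_iterate (hT : MeasurePreserving T μ μ) (hg : Integrable g μ) (k : ℕ) :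
    Integrable (fun x => g (T^[k] x)) μ :=
  ((hT.iterate k).integrable_comp hg.aestronglyMeasurable).2 hg

theorem integral_comp_iterate (hT : MeasurePreserving T μ μ) (hg : AEStronglyMeasurable g μ)
    (k : ℕ) : ∫ x, g (T^[k] x) ∂μ = ∫ x, g x ∂μ := by
  have h := hT.iterate k
  rw [← integral_map h.aemeasurable (by rwa [h.map_eq]), h.map_eq]

theorem integrable_birkhoffSum (hT : MeasurePreserving T μ μ) (hg : Integrable g μ) (n : ℕ) :
    Integrable (birkhoffSum T g n) μ :=
  integrable_finsetSum (Finset.range n) fun k _ => hT.integrable_comp_iterate hg k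

theorem integral_birkhoffSum (hT : MeasurePreserving T μ μ) (hg : Integrable g μ) (n : ℕ) :
    ∫ x, birkhoffSum T g n x ∂μ = n * ∫ x, g x ∂μ := by
  simp only [birkhoffSum]
  rw [integral_finsetSum _ fun k _ => hT.integrable_comp_iterate hg k]
  simp [hT.integral_comp_iterate hg.aestronglyMeasurable]

variable [IsProbabilityMeasure μ] {a : ℝ}

theorem mul_measureReal_le_integral_of_cover (hT : MeasurePreserving T μ μ) (hgi : Integrable g μ)
    (hg : 0 ≤ g) (ha : 0 ≤ a) {E : Set α} (hE : MeasurableSet E) {M : ℕ}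
    (hcover : ∀ y ∈ E, ∃ n ∈ Finset.Icc 1 M, a * n ≤ birkhoffSum T g n y) :
    a * μ.real E ≤ ∫ x, g x ∂μ := by
  have hI : Integrable (Eᶜ.indicator (1 : α → ℝ)) μ := (integrable_const 1).indicator hE.compl
  have key (N : ℕ) : N * (a * μ.real E - ∫ x, g x ∂μ) ≤ a * M := by
    have hS := hT.integrable_birkhoffSum hgi N
    have hSI := hT.integrable_birkhoffSum hI N
    have hS' : Integrable (fun x => birkhoffSum T g N x + a * M) μ := hS.add (integrable_const _)
    have hSI' : Integrable (fun x => a * birkhoffSum T (Eᶜ.indicator 1) N x) μ := hSI.const_mul a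
    have hint : ∫ x, (birkhoffSum T g N x + a * M + a * birkhoffSum T (Eᶜ.indicator 1) N x) ∂μ
        = N * ∫ x, g x ∂μ + a * M + a * (N * (1 - μ.real E)) := by
      rw [integral_add hS' hSI', integral_add hS (integrable_const _),
        integral_const_mul a (birkhoffSum _ _ N), hT.integral_birkhoffSum hgi,
        hT.integral_birkhoffSum hI, integral_indicator_one hE.compl, probReal_compl_eq_one_sub hE]
      simp
    have := integral_mono (integrable_const (a * N)) (hS'.add hSI')
      fun x => mul_le_birkhoffSum_add_of_cover hg ha hcover N x
    simp only [Pi.add_apply, hint, integral_const, probReal_univ, one_smul] at this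
    linarith
  by_contra! h
  obtain ⟨N, hN⟩ := exists_nat_gt (a * M / (a * μ.real E - ∫ x, g x ∂μ))
  rw [div_lt_iff₀ (sub_pos.2 h)] at hN
  linarith [key N]

theorem le_integral_of_ae_exists_le_birkhoffSum (hT : MeasurePreserving T μ μ)
    (hgm : Measurable g) (hgi : Integrable g μ) (hg : 0 ≤ g)
    (h : ∀ᵐ x ∂μ, ∃ n, 1 ≤ n ∧ a * n ≤ birkhoffSum T g n x) :
    a ≤ ∫ x, g x ∂μ := by
  rcases lt_or_ge a 0 with ha | ha
  · exact ha.le.trans (integral_nonneg hg)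
  set E : ℕ → Set α := fun M => {y | ∃ n ∈ Finset.Icc 1 M, a * n ≤ birkhoffSum T g n y}
  have hEm (M : ℕ) : MeasurableSet (E M) := by
    have : E M = ⋃ n ∈ Finset.Icc 1 M, {y | a * n ≤ birkhoffSum T g n y} := by ext; simp [E]
    rw [this]
    exact Finset.measurableSet_biUnion _ fun n _ =>
      measurableSet_le measurable_const (hT.measurable.birkhoffSum hgm n)
  have hmono : Monotone E := fun M M' hM y ⟨n, hn, hy⟩ =>
    ⟨n, Finset.Icc_subset_Icc_right hM hn, hy⟩
  have hfull : μ (⋃ M, E M) = 1 := by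
    refine (prob_compl_eq_zero_iff (.iUnion hEm)).1 (ae_iff.1 ?_)
    filter_upwards [h] with y ⟨n, hn, hy⟩
    exact Set.mem_iUnion.2 ⟨n, n, Finset.mem_Icc.2 ⟨hn, le_rfl⟩, hy⟩
  have hlim : Tendsto (fun M => a * μ.real (E M)) atTop (𝓝 (a * 1)) := by
    refine Tendsto.const_mul a ?_
    have := tendsto_measure_iUnion_atTop (μ := μ) hmono
    rw [hfull] at this
    exact (ENNReal.tendsto_toReal ENNReal.one_ne_top).comp this
  rw [← mul_one a]
  exact le_of_tendsto' hlim fun M =>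
    hT.mul_measureReal_le_integral_of_cover hgi hg ha (hEm M) fun y hy => hy

end MeasureTheory.MeasurePreserving

theorem Filter.limsup_le_limsup_of_tendsto_sub {ι : Type*} {l : Filter ι} [l.NeBot]
    {u v : ι → ℝ} (hv : IsBoundedUnder (· ≤ ·) l v) (hv' : IsBoundedUnder (· ≥ ·) l v)
    (h : Tendsto (fun i => u i - v i) l (𝓝 0)) : limsup u l ≤ limsup v l := by
  have h' : Tendsto (u - v) l (𝓝 0) := h
  have := limsup_add_le hv' hv h'.isBoundedUnder_ge.isCoboundedUnder_le h'.isBoundedUnder_le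
  rwa [add_sub_cancel, h'.limsup_eq, add_zero] at this

section BirkhoffAverage

variable {α : Type*} {T : α → α} {g : α → ℝ} {B : ℝ}

theorem abs_birkhoffAverage_le (hgB : ∀ x, |g x| ≤ B) (n : ℕ) (x : α) :
    |birkhoffAverage ℝ T g n x| ≤ B := by
  have hB : 0 ≤ B := (abs_nonneg _).trans (hgB x)
  rcases eq_or_ne n 0 with rfl | hn
  · simpa using hB
  have : |birkhoffSum T g n x| ≤ n * B := by
    calc |birkhoffSum T g n x| ≤ ∑ k ∈ Finset.range n, |g (T^[k] x)| :=
          Finset.abs_sum_le_sum_abs _ _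
      _ ≤ ∑ _k ∈ Finset.range n, B := Finset.sum_le_sum fun k _ => hgB (T^[k] x)
      _ = n * B := by simp
  rwa [birkhoffAverage, smul_eq_mul, abs_mul, abs_inv, Nat.abs_cast,
    inv_mul_le_iff₀ (by positivity)]

theorem isBoundedUnder_le_birkhoffAverage (hgB : ∀ x, |g x| ≤ B) (x : α) :
    IsBoundedUnder (· ≤ ·) atTop (birkhoffAverage ℝ T g · x) :=
  isBoundedUnder_of ⟨B, fun n => (abs_le.1 (abs_birkhoffAverage_le hgB n x)).2⟩

theorem isBoundedUnder_ge_birkhoffAverage (hgB : ∀ x, |g x| ≤ B) (x : α) :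
    IsBoundedUnder (· ≥ ·) atTop (birkhoffAverage ℝ T g · x) :=
  isBoundedUnder_of ⟨-B, fun n => (abs_le.1 (abs_birkhoffAverage_le hgB n x)).1⟩

end BirkhoffAverage

namespace Ergodic

variable {α : Type*} [MeasurableSpace α] {μ : Measure α} [IsProbabilityMeasure μ] {T : α → α}
  {g : α → ℝ} {B : ℝ}

theorem ae_limsup_birkhoffAverage_le (hT : Ergodic T μ) (hgm : Measurable g)
    (hgB : ∀ x, |g x| ≤ B) :
    ∀ᵐ x ∂μ, limsup (birkhoffAverage ℝ T g · x) atTop ≤ ∫ x, g x ∂μ := by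
  set L : α → ℝ := fun x => limsup (birkhoffAverage ℝ T g · x) atTop
  have hLm : Measurable L := .limsup fun n => hT.measurable.birkhoffAverage hgm n
  have hsub (x : α) :
      Tendsto (fun n => birkhoffAverage ℝ T g n (T x) - birkhoffAverage ℝ T g n x) atTop (𝓝 0) :=
    tendsto_birkhoffAverage_apply_sub_birkhoffAverage' ℝ (isBounded_iff_forall_norm_le.2
      ⟨B, Set.forall_mem_range.2 fun x => (Real.norm_eq_abs _).trans_le (hgB x)⟩) T x
  have hLT : L ∘ T = L := funext fun x => le_antisymm
    (limsup_le_limsup_of_tendsto_sub (isBoundedUnder_le_birkhoffAverage hgB x)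
      (isBoundedUnder_ge_birkhoffAverage hgB x) (hsub x))
    (limsup_le_limsup_of_tendsto_sub (isBoundedUnder_le_birkhoffAverage hgB (T x))
      (isBoundedUnder_ge_birkhoffAverage hgB (T x)) (by simpa using (hsub x).neg))
  obtain ⟨c, hc⟩ := hT.ae_eq_const_of_ae_eq_comp_ae hLm.aestronglyMeasurable (by rw [hLT])
  suffices c ≤ ∫ x, g x ∂μ by filter_upwards [hc] with x hx using hx.trans_le this
  refine forall_lt_imp_le_iff_le_of_dense.1 fun a ha => ?_
  have hgi : Integrable g μ := .of_bound hgm.aestronglyMeasurable B (.of_forall hgB)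
  -- shifting by `B` makes the observable nonnegative
  have key := hT.toMeasurePreserving.le_integral_of_ae_exists_le_birkhoffSum (a := a + B)
    (hgm.add_const B) (hgi.add (integrable_const B))
    (fun x => show 0 ≤ g x + B by linarith [abs_le.1 (hgB x)]) ?_
  · rw [integral_add hgi (integrable_const B)] at key
    simpa using key
  filter_upwards [hc] with x (hx : L x = c)
  obtain ⟨n, hlt, hn⟩ := ((frequently_lt_of_lt_limsup
    (isBoundedUnder_ge_birkhoffAverage hgB x).isCoboundedUnder_le (hx ▸ ha)).and_eventually
      (eventually_ge_atTop 1)).exists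
  refine ⟨n, hn, ?_⟩
  rw [birkhoffAverage, smul_eq_mul, lt_inv_mul_iff₀ (by positivity)] at hlt
  have : birkhoffSum T (fun y => g y + B) n x = birkhoffSum T g n x + n * B := by
    simp [birkhoffSum, Finset.sum_add_distrib]
  rw [this]
  linarith

theorem ae_tendsto_birkhoffAverage (hT : Ergodic T μ) (hgm : Measurable g)
    (hgB : ∀ x, |g x| ≤ B) :
    ∀ᵐ x ∂μ, Tendsto (birkhoffAverage ℝ T g · x) atTop (𝓝 (∫ x, g x ∂μ)) := by
  have hgB' (x : α) : |(-g) x| ≤ B := by simpa using hgB x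
  filter_upwards [hT.ae_limsup_birkhoffAverage_le hgm hgB,
    hT.ae_limsup_birkhoffAverage_le hgm.neg hgB'] with x hup hlow
  refine tendsto_order.2 ⟨fun a ha => ?_, fun a ha =>
    eventually_lt_of_limsup_lt (hup.trans_lt ha) (isBoundedUnder_le_birkhoffAverage hgB x)⟩
  rw [integral_neg'] at hlow
  filter_upwards [eventually_lt_of_limsup_lt (hlow.trans_lt (neg_lt_neg ha))
    (isBoundedUnder_le_birkhoffAverage hgB' x)] with n hn
  simpa [birkhoffAverage_neg] using hn

end Ergodic

section WeakConvergence

variable {Ω : Type*} [TopologicalSpace Ω] [MeasurableSpace Ω] [OpensMeasurableSpace Ω]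

theorem BoundedContinuousFunction.lipschitzWith_integral (μ : Measure Ω)
    [IsProbabilityMeasure μ] :
    LipschitzWith 1 (fun f : Ω →ᵇ ℝ => ∫ x, f x ∂μ) := by
  refine LipschitzWith.of_dist_le_mul fun f g => ?_
  rw [NNReal.coe_one, one_mul, Real.dist_eq, ← integral_sub (f.integrable μ) (g.integrable μ)]
  simpa [dist_eq_norm] using (f - g).norm_integral_le_norm μ

theorem MeasureTheory.ProbabilityMeasure.tendsto_of_dense_integral_tendsto {ι : Type*}
    {l : Filter ι} {μs : ι → ProbabilityMeasure Ω} {μ : ProbabilityMeasure Ω}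
    {D : Set (Ω →ᵇ ℝ)} (hD : Dense D)
    (h : ∀ f ∈ D,
      Tendsto (fun i => ∫ x, f x ∂(μs i : Measure Ω)) l (𝓝 (∫ x, f x ∂(μ : Measure Ω)))) :
    Tendsto μs l (𝓝 μ) := by
  have hclosed : IsClosed {f : Ω →ᵇ ℝ |
      Tendsto (fun i => ∫ x, f x ∂(μs i : Measure Ω)) l (𝓝 (∫ x, f x ∂(μ : Measure Ω)))} :=
    (LipschitzWith.uniformEquicontinuous _ 1 fun i =>
      BoundedContinuousFunction.lipschitzWith_integral _).equicontinuous.isClosed_setOfPred_tendsto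
        (BoundedContinuousFunction.lipschitzWith_integral _).continuous
  rw [ProbabilityMeasure.tendsto_iff_forall_integral_tendsto]
  intro f
  exact hclosed.closure_subset_iff.2 h (hD f)

end WeakConvergence

section OrbitMeasure

variable {X : Type*} [MeasurableSpace X]

/-- The empirical measure of the `n + 1` points `x, T x, …, T^[n] x` (one more than `n`, so that
it is a probability measure for every `n`). -/
noncomputable def orbitMeasure (T : X → X) (x : X) (n : ℕ) : ProbabilityMeasure X :=
  ⟨((n + 1 : ℕ) : ℝ≥0∞)⁻¹ • ∑ k ∈ Finset.range (n + 1), Measure.dirac (T^[k] x), by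
    constructor
    simp [ENNReal.inv_mul_cancel]⟩

variable [MeasurableSingletonClass X] (T : X → X) (x : X) (n : ℕ)

theorem integral_orbitMeasure (g : X → ℝ) :
    ∫ y, g y ∂(orbitMeasure T x n : Measure X) = birkhoffAverage ℝ T g (n + 1) x := by
  simp only [orbitMeasure, ProbabilityMeasure.coe_mk]
  rw [integral_smul_measure, integral_finsetSum_measure fun k _ => integrable_dirac enorm_lt_top]
  simp [birkhoffAverage, birkhoffSum, integral_dirac, ENNReal.toReal_add]

end OrbitMeasure

theorem integral_prod_orbitMeasure {X : Type*} [MeasurableSpace X] [MeasurableSingletonClass X]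
    (T : X → X) (x : X) (n : ℕ) {f : X × X → ℝ}
    (hf : Integrable f ((orbitMeasure T x n : Measure X).prod (orbitMeasure T x n))) :
    ∫ p, f p ∂((orbitMeasure T x n : Measure X).prod (orbitMeasure T x n)) =
      (((n + 1 : ℕ) : ℝ) ^ 2)⁻¹ *
        ∑ i ∈ Finset.range (n + 1), ∑ j ∈ Finset.range (n + 1), f (T^[i] x, T^[j] x) := by
  simp only [integral_prod f hf, integral_orbitMeasure, birkhoffAverage, birkhoffSum, smul_eq_mul,
    Finset.mul_sum]
  refine Finset.sum_congr rfl fun i _ => Finset.sum_congr rfl fun j _ => ?_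
  ring

theorem Finset.sum_Icc_sum_Icc_iterate {X M : Type*} [AddCommMonoid M] (T : X → X) (x : X)
    (f : X × X → M) (m : ℕ) :
    ∑ i ∈ Icc 1 m, ∑ j ∈ Icc 1 m, f (T^[i] x, T^[j] x) =
      ∑ i ∈ range m, ∑ j ∈ range m, f (T^[i] (T x), T^[j] (T x)) := by
  simp [← Ico_add_one_right_eq_Icc, sum_Ico_eq_sum_range, add_comm 1, Function.iterate_succ_apply]

theorem Ergodic.ae_tendsto_orbitMeasure {X : Type*} [MetricSpace X] [CompactSpace X]
    [MeasurableSpace X] [BorelSpace X] {μ : Measure X} [IsProbabilityMeasure μ] {T : X → X}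
    (hT : Ergodic T μ) :
    ∀ᵐ x ∂μ, Tendsto (orbitMeasure T x) atTop (𝓝 ⟨μ, ‹_›⟩) := by
  obtain ⟨D, hD⟩ := TopologicalSpace.exists_dense_seq C(X, ℝ)
  have hD' : DenseRange (BoundedContinuousFunction.mkOfCompact ∘ D) :=
    (ContinuousMap.isometryEquivBoundedOfCompact X ℝ).surjective.denseRange.comp hD
      (ContinuousMap.isometryEquivBoundedOfCompact X ℝ).continuous
  filter_upwards [ae_all_iff.2 fun k => hT.ae_tendsto_birkhoffAverage (D k).continuous.measurable
    (D k).norm_coe_le_norm] with x hx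
  refine ProbabilityMeasure.tendsto_of_dense_integral_tendsto hD' ?_
  rintro - ⟨k, rfl⟩
  simpa [integral_orbitMeasure] using (tendsto_add_atTop_iff_nat 1).2 (hx k)

theorem stmt_3 {X : Type*} [MetricSpace X] [CompactSpace X] [MeasurableSpace X] [BorelSpace X]
    (μ : Measure X) [IsProbabilityMeasure μ] (T : X → X) (hT : Ergodic T μ) :
    ∀ᵐ x ∂μ, ∀ f : X × X → ℝ, Continuous f →
      Tendsto (fun n : ℕ => ((n : ℝ) ^ 2)⁻¹ *
          ∑ i ∈ Finset.Icc 1 n, ∑ j ∈ Finset.Icc 1 n, f (T^[i] x, T^[j] x))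
        atTop (𝓝 (∫ p, f p ∂(μ.prod μ))) := by
  filter_upwards [hT.quasiMeasurePreserving.ae hT.ae_tendsto_orbitMeasure] with x hx f hf
  have hprod := (ProbabilityMeasure.continuous_prod.tendsto _).comp (hx.prodMk_nhds hx)
  let F := BoundedContinuousFunction.mkOfCompact ⟨f, hf⟩
  rw [← tendsto_add_atTop_iff_nat 1]
  refine (ProbabilityMeasure.tendsto_iff_forall_integral_tendsto.1 hprod F).congr fun n => ?_
  rw [Finset.sum_Icc_sum_Icc_iterate]
  exact integral_prod_orbitMeasure T (T x) n (F.integrable _)
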